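/- In any orientation of a complete bipartite graph, if partite set V1 is not dominated by V2 (no vertex of V2 pecks all of V1), then any vertex of V1 with maximal out-degree within V1 is a 3-Duke. -/

import Mathlib

/-- An orientation of a complete multipartite graph: vertices `V`, partite sets
given as fibers of `part : V → ι`, and `peck` the arc relation. Between any two
vertices in different partite sets there is exactly one arc, and there are no
arcs within a partite set. -/
structure MTour (V : Type*) (ι : Type*) where
  part : V → ι
  peck : V → V → Prop
  complete : ∀ u v, part u ≠ part v → peck u v ∨ peck v u
  inter : ∀ u v, peck u v → part u ≠ part v
  asymm : ∀ u v, peck u v → ¬ peck v u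

namespace MTour

variable {V ι : Type*}

/-- There is a directed path of length at most `m` from `d` to `c`. -/
def hasPath (T : MTour V ι) (m : ℕ) (d c : V) : Prop :=
  ∃ k ≤ m, ∃ f : ℕ → V, f 0 = d ∧ f k = c ∧ ∀ i < k, T.peck (f i) (f (i + 1))

/-- `d` is an `m`-Duke: every vertex in a different partite set is reachable
from `d` by a directed path of length at most `m`. -/
def isDuke (T : MTour V ι) (m : ℕ) (d : V) : Prop :=
  ∀ c, T.part c ≠ T.part d → T.hasPath m d c

/-- `d` is an `m`-King: every other vertex is reachable from `d` by a directed
path of length at most `m`. -/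
def isKing (T : MTour V ι) (m : ℕ) (d : V) : Prop :=
  ∀ c, c ≠ d → T.hasPath m d c

/-- The out-degree of a vertex. -/
noncomputable def outDeg (T : MTour V ι) (v : V) : ℕ :=
  Nat.card {w // T.peck v w}

/-- `e` eclipses `d`: same partite set, `e` pecks everything `d` pecks, and
at least one vertex `d` does not peck. -/
def eclipses (T : MTour V ι) (e d : V) : Prop :=
  T.part e = T.part d ∧ (∀ c, T.peck d c → T.peck e c) ∧ ∃ c, T.peck e c ∧ ¬ T.peck d c

/-- `d` is non-eclipsed: no vertex of its partite set eclipses it. -/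
def nonEclipsed (T : MTour V ι) (d : V) : Prop :=
  ∀ e, ¬ T.eclipses e d

/-- Partite set `i` dominates partite set `j`: some vertex of `i` pecks all of `j`. -/
def Dominates (T : MTour V ι) (i j : ι) : Prop :=
  ∃ v, T.part v = i ∧ ∀ w, T.part w = j → T.peck v w

end MTour

/-! If `d` does not peck `c`, then, since `c` does not peck all of `d`'s side, some `w` on that
side pecks `c`. Were there no path `d → a → w`, the vertex `w` would peck every out-neighbour of
`d` and also `c`, i.e. `w` would eclipse `d` and have larger out-degree. -/

namespace MTour

variable {V ι : Type*} (T : MTour V ι)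

theorem peck_of_not_peck {u v : V} (h : T.part u ≠ T.part v) (hvu : ¬ T.peck v u) :
    T.peck u v :=
  (T.complete u v h).resolve_right hvu

theorem hasPath_refl (d : V) : T.hasPath 0 d d :=
  ⟨0, le_rfl, fun _ => d, rfl, rfl, by simp⟩

variable {T}

theorem hasPath.mono {m n : ℕ} {d c : V} (h : T.hasPath m d c) (hmn : m ≤ n) :
    T.hasPath n d c :=
  let ⟨k, hk, rest⟩ := h
  ⟨k, hk.trans hmn, rest⟩

theorem hasPath.concat {m : ℕ} {d a c : V} (h : T.hasPath m d a) (hac : T.peck a c) :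
    T.hasPath (m + 1) d c := by
  obtain ⟨k, hk, f, hf0, hfk, hf⟩ := h
  refine ⟨k + 1, by omega, fun i => if i ≤ k then f i else c, by simp [hf0], by simp, ?_⟩
  intro i hi
  rcases Nat.lt_succ_iff_lt_or_eq.mp hi with hik | rfl
  · simpa [hik.le, Nat.succ_le_of_lt hik] using hf i hik
  · simpa [hfk] using hac

theorem outDeg_lt_of_eclipses [Finite V] {e d : V} (h : T.eclipses e d) :
    T.outDeg d < T.outDeg e := by
  obtain ⟨-, hsub, c, hec, hdc⟩ := h
  change Nat.card {a | T.peck d a} < Nat.card {a | T.peck e a}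
  rw [Nat.card_coe_set_eq, Nat.card_coe_set_eq]
  exact Set.ncard_lt_ncard ⟨hsub, fun hsup => hdc (hsup hec)⟩ (Set.toFinite _)

theorem eclipses_of_forall_not_peck {w d c : V} (hwd : T.part w = T.part d)
    (hpath : ∀ a, T.peck d a → ¬ T.peck a w) (hwc : T.peck w c) (hdc : ¬ T.peck d c) :
    T.eclipses w d := by
  refine ⟨hwd, fun a hda => T.peck_of_not_peck ?_ (hpath a hda), c, hwc, hdc⟩
  rw [hwd]
  exact T.inter d a hda

theorem exists_peck_peck_of_outDeg_le [Finite V] {w d c : V} (hwd : T.part w = T.part d)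
    (hdeg : T.outDeg w ≤ T.outDeg d) (hwc : T.peck w c) (hdc : ¬ T.peck d c) :
    ∃ a, T.peck d a ∧ T.peck a w := by
  by_contra! hpath
  exact (outDeg_lt_of_eclipses (eclipses_of_forall_not_peck hwd hpath hwc hdc)).not_ge hdeg

end MTour

/-- In a bipartite tournament, if partite set `b` is not dominated by the
other partite set, then any vertex of partite set `b` of maximal out-degree
within `b` is a 3-Duke. -/
theorem stmt2 {V : Type*} [Finite V] (T : MTour V Bool) (b : Bool)
    (hnodom : ¬ ∃ v, T.part v ≠ b ∧ ∀ w, T.part w = b → T.peck v w)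
    (d : V) (hd : T.part d = b)
    (hprom : ∀ w, T.part w = b → T.outDeg w ≤ T.outDeg d) :
    T.isDuke 3 d := by
  intro c hc
  by_cases hdc : T.peck d c
  · exact ((T.hasPath_refl d).concat hdc).mono (by norm_num)
  obtain ⟨w, hwb, hcw⟩ : ∃ w, T.part w = b ∧ ¬ T.peck c w := by
    push Not at hnodom
    exact hnodom c (hd ▸ hc)
  have hwc : T.peck w c := T.peck_of_not_peck (by rwa [hwb, ← hd, ne_comm]) hcw
  obtain ⟨a, hda, haw⟩ :=
    MTour.exists_peck_peck_of_outDeg_le (hwb.trans hd.symm) (hprom w hwb) hwc hdc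
  exact (((T.hasPath_refl d).concat hda).concat haw).concat hwc
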